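/- Let m' > m ≥ 1 and let i ≥ 1 be an integer. Then Γ(i+m)/Γ(i) + m·∑_{n=i+1}^∞ Γ(n+m−1)·Γ(i+m')/(Γ(i)·Γ(n+m')) = Γ(i+m)/Γ(i) · (1 + m/(m'−m)) = (m'/(m'−m))·Γ(i+m)/Γ(i). -/

import Mathlib

/-!
Put `c = m' - m` and `r x = Γ x / Γ (x + c)`. The functional equation of `Γ` gives
`r x - r (x + 1) = c Γ x / Γ (x + c + 1)`, so the series is `Γ (i + m') / Γ i` times a
telescoping sum with value `r (i + m) / c`, once we know `r x → 0`. That follows from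
log-convexity of `Γ`: comparing slopes of `log Γ` on `[x - 1, x]` and `[x, x + c]` yields
`Γ (x + c) ≥ (x - 1) ^ c Γ x`.
-/

open Real Filter Topology

theorem hasSum_sub_succ_of_antitone {f : ℕ → ℝ} (hf : Antitone f) {l : ℝ}
    (hl : Tendsto f atTop (𝓝 l)) : HasSum (fun n ↦ f n - f (n + 1)) (f 0 - l) := by
  rw [hasSum_iff_tendsto_nat_of_nonneg fun n ↦ sub_nonneg.2 (hf n.le_succ)]
  simp only [Finset.sum_range_sub']
  exact tendsto_const_nhds.sub hl

namespace Real

theorem Gamma_mul_rpow_le_Gamma_add {x c : ℝ} (hx : 1 < x) (hc : 0 < c) :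
    Gamma x * (x - 1) ^ c ≤ Gamma (x + c) := by
  have hx1 : 0 < x - 1 := by linarith
  have hGx := Gamma_pos_of_pos (by linarith : 0 < x)
  have hslope := convexOn_log_Gamma.slope_mono_adjacent (x := x - 1) (y := x) (z := x + c)
    (Set.mem_Ioi.2 hx1) (Set.mem_Ioi.2 (by linarith)) (by linarith) (by linarith)
  have hrec : Gamma x = (x - 1) * Gamma (x - 1) := by
    simpa using Gamma_add_one hx1.ne'
  have hlog : log (Gamma x) - log (Gamma (x - 1)) = log (x - 1) := by
    rw [hrec, log_mul hx1.ne' (Gamma_pos_of_pos hx1).ne']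
    ring
  simp only [Function.comp, hlog, sub_sub_cancel, div_one, add_sub_cancel_left] at hslope
  have hGxc := Gamma_pos_of_pos (by linarith : 0 < x + c)
  rw [← le_div_iff₀' hGx, rpow_def_of_pos hx1, ← exp_log (div_pos hGxc hGx),
    log_div hGxc.ne' hGx.ne']
  gcongr
  rw [le_div_iff₀ hc] at hslope
  linarith

theorem tendsto_Gamma_div_Gamma_add_atTop {c : ℝ} (hc : 0 < c) :
    Tendsto (fun x ↦ Gamma x / Gamma (x + c)) atTop (𝓝 0) := by
  have hpow : Tendsto (fun x : ℝ ↦ (x - 1) ^ (-c)) atTop (𝓝 0) :=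
    (tendsto_rpow_neg_atTop hc).comp (tendsto_atTop_add_const_right _ _ tendsto_id)
  refine squeeze_zero' ?_ ?_ hpow
  · filter_upwards [eventually_gt_atTop 0] with x hx
    exact div_nonneg (Gamma_pos_of_pos hx).le (Gamma_pos_of_pos (by linarith)).le
  · filter_upwards [eventually_gt_atTop 1] with x hx
    have hx1 : 0 < x - 1 := by linarith
    rw [div_le_iff₀ (Gamma_pos_of_pos (by linarith)), rpow_neg hx1.le, ← div_eq_inv_mul,
      le_div_iff₀ (rpow_pos_of_pos hx1 c)]
    exact Gamma_mul_rpow_le_Gamma_add hx hc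

theorem Gamma_div_Gamma_add_sub_succ {y c : ℝ} (hy : 0 < y) (hc : 0 < y + c) :
    Gamma y / Gamma (y + c) - Gamma (y + 1) / Gamma (y + 1 + c) =
      c * (Gamma y / Gamma (y + c + 1)) := by
  have hG := (Gamma_pos_of_pos hc).ne'
  rw [add_right_comm y 1 c, Gamma_add_one hy.ne', Gamma_add_one hc.ne']
  field_simp
  ring

theorem hasSum_Gamma_div_Gamma_add_succ {s c : ℝ} (hs : 0 < s) (hc : 0 < c) :
    HasSum (fun k : ℕ ↦ Gamma (s + k) / Gamma (s + k + c + 1))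
      (Gamma s / (c * Gamma (s + c))) := by
  set r : ℕ → ℝ := fun k ↦ Gamma (s + k) / Gamma (s + k + c)
  have hdiff (k : ℕ) : r k - r (k + 1) = c * (Gamma (s + k) / Gamma (s + k + c + 1)) := by
    have hk : 0 < s + k := by positivity
    simpa only [r, Nat.cast_succ, ← add_assoc] using
      Gamma_div_Gamma_add_sub_succ hk (by linarith : 0 < s + k + c)
  have hanti : Antitone r := antitone_nat_of_succ_le fun k ↦ by
    have : 0 < s + k := by positivity
    rw [← sub_nonneg, hdiff]
    exact mul_nonneg hc.le (div_nonneg (Gamma_pos_of_pos this).le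
      (Gamma_pos_of_pos (by linarith)).le)
  have hlim : Tendsto r atTop (𝓝 0) :=
    (tendsto_Gamma_div_Gamma_add_atTop hc).comp
      (tendsto_atTop_add_const_left _ _ tendsto_natCast_atTop_atTop)
  have := (hasSum_sub_succ_of_antitone hanti hlim).div_const c
  simp only [hdiff, mul_div_cancel_left₀ _ hc.ne', sub_zero, r, Nat.cast_zero, add_zero] at this
  rwa [div_div, mul_comm] at this

end Real

theorem stmt_19_general (m m' : ℝ) (hm : 1 ≤ m) (hmm : m < m') (i : ℕ) :
    Real.Gamma ((i : ℝ) + m) / Real.Gamma i +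
        m * ∑' k : ℕ,
          Real.Gamma (((i + 1 + k : ℕ) : ℝ) + m - 1) * Real.Gamma ((i : ℝ) + m') /
            (Real.Gamma i * Real.Gamma (((i + 1 + k : ℕ) : ℝ) + m'))
      = Real.Gamma ((i : ℝ) + m) / Real.Gamma i * (1 + m / (m' - m)) ∧
    Real.Gamma ((i : ℝ) + m) / Real.Gamma i * (1 + m / (m' - m))
      = (m' / (m' - m)) * (Real.Gamma ((i : ℝ) + m) / Real.Gamma i) := by
  have hs : 0 < (i : ℝ) + m := by positivity
  have hc : 0 < m' - m := sub_pos.2 hmm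
  have hGm' : Gamma (i + m') ≠ 0 := (Gamma_pos_of_pos (by linarith)).ne'
  have hterm (k : ℕ) :
      Gamma (((i + 1 + k : ℕ) : ℝ) + m - 1) * Gamma ((i : ℝ) + m') /
          (Gamma i * Gamma (((i + 1 + k : ℕ) : ℝ) + m')) =
        Gamma (i + m') / Gamma i *
          (Gamma (i + m + k) / Gamma (i + m + k + (m' - m) + 1)) := by
    push_cast
    rw [show (i : ℝ) + 1 + k + m - 1 = i + m + k by ring,
      show (i : ℝ) + 1 + k + m' = i + m + k + (m' - m) + 1 by ring]
    ring
  rw [tsum_congr hterm, tsum_mul_left, (hasSum_Gamma_div_Gamma_add_succ hs hc).tsum_eq,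
    add_add_sub_cancel]
  constructor
  · field_simp
  · field_simp
    ring

/-- For `m' > m ≥ 1` and integer `i ≥ 1`,
`Γ(i+m)/Γ(i) + m ∑_{n=i+1}^∞ Γ(n+m−1)Γ(i+m')/(Γ(i)Γ(n+m'))
  = Γ(i+m)/Γ(i)·(1 + m/(m'−m)) = (m'/(m'−m))·Γ(i+m)/Γ(i)`. -/
theorem stmt_19 (m m' : ℝ) (hm : 1 ≤ m) (hmm : m < m') (i : ℕ) (hi : 1 ≤ i) :
    Real.Gamma ((i : ℝ) + m) / Real.Gamma i +
        m * ∑' k : ℕ,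
          Real.Gamma (((i + 1 + k : ℕ) : ℝ) + m - 1) * Real.Gamma ((i : ℝ) + m') /
            (Real.Gamma i * Real.Gamma (((i + 1 + k : ℕ) : ℝ) + m'))
      = Real.Gamma ((i : ℝ) + m) / Real.Gamma i * (1 + m / (m' - m)) ∧
    Real.Gamma ((i : ℝ) + m) / Real.Gamma i * (1 + m / (m' - m))
      = (m' / (m' - m)) * (Real.Gamma ((i : ℝ) + m) / Real.Gamma i) :=
  stmt_19_general m m' hm hmm i
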